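/- For every finite poset P and natural number m, e(m+1, P) = Σ_{D} d(P − DP) · e(m, P − D), where the sum ranges over all downsets D of P and DP denotes the up-closure of D in P. -/
import Mathlib


open scoped Classical

variable {α : Type*} [DecidableEq α]

/-- `q` is a partial order relation with ground set `S`: it is a set of pairs
contained in `S × S`, reflexive on `S`, transitive and antisymmetric. -/
def IsPOon (S : Finset α) (q : Finset (α × α)) : Prop :=
  q ⊆ S ×ˢ S ∧ (∀ x ∈ S, (x, x) ∈ q) ∧
  (∀ x y z : α, (x, y) ∈ q → (y, z) ∈ q → (x, z) ∈ q) ∧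
  (∀ x y : α, (x, y) ∈ q → (y, x) ∈ q → x = y)

/-- The relation induced on a subset `A` of the ground set. -/
def restrictRel (q : Finset (α × α)) (A : Finset α) : Finset (α × α) :=
  q.filter fun r => r.1 ∈ A ∧ r.2 ∈ A

/-- The downsets of the poset `(S, q)`. -/
noncomputable def downsets (S : Finset α) (q : Finset (α × α)) : Finset (Finset α) :=
  S.powerset.filter fun D => ∀ y ∈ D, ∀ x : α, (x, y) ∈ q → x ∈ D

/-- `d(P)`, the number of downsets of the poset `(S, q)`. -/
noncomputable def dnum (S : Finset α) (q : Finset (α × α)) : ℕ :=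
  (downsets S q).card

/-- The upsets of the poset `(S, q)`. -/
noncomputable def upsets (S : Finset α) (q : Finset (α × α)) : Finset (Finset α) :=
  S.powerset.filter fun U => ∀ x ∈ U, ∀ y : α, (x, y) ∈ q → y ∈ U

/-- Down-closure `QA = {x : x ≤_Q a for some a ∈ A}`. -/
def dcl (q : Finset (α × α)) (A : Finset α) : Finset α :=
  (q.filter fun r => r.2 ∈ A).image Prod.fst

/-- Up-closure `AQ = {y : a ≤_Q y for some a ∈ A}`. -/
def ucl (q : Finset (α × α)) (A : Finset α) : Finset α :=
  (q.filter fun r => r.1 ∈ A).image Prod.snd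

/-- The set of minimal elements of the poset `(S, q)`. -/
noncomputable def minset (S : Finset α) (q : Finset (α × α)) : Finset α :=
  S.filter fun x => ∀ y : α, (y, x) ∈ q → y = x

/-- `E(M, P)`: the partial orders on `M ∪ K` inducing `p` on `K` whose set of
minimal elements is exactly `M`. -/
noncomputable def extPOs (M K : Finset α) (p : Finset (α × α)) :
    Finset (Finset (α × α)) :=
  ((M ∪ K) ×ˢ (M ∪ K)).powerset.filter fun q =>
    IsPOon (M ∪ K) q ∧ restrictRel q K = p ∧ minset (M ∪ K) q = M

/-- `A` is an antichain of the poset `(S, q)`. -/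
def isAntichain (S : Finset α) (q : Finset (α × α)) (A : Finset α) : Prop :=
  A ⊆ S ∧ ∀ x ∈ A, ∀ y ∈ A, (x, y) ∈ q → x = y

/-- The posets `(S, q)` and `(T, r)` are order-isomorphic. -/
def POIso {β : Type*} (S : Finset α) (q : Finset (α × α))
    (T : Finset β) (r : Finset (β × β)) : Prop :=
  ∃ f : α → β, Set.BijOn f ↑S ↑T ∧ ∀ x ∈ S, ∀ y ∈ S, ((x, y) ∈ q ↔ (f x, f y) ∈ r)

/-- `C` is a chain of the poset `(S, q)`. -/
def isChainOn (S : Finset α) (q : Finset (α × α)) (C : Finset α) : Prop :=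
  C ⊆ S ∧ ∀ x ∈ C, ∀ y ∈ C, (x, y) ∈ q ∨ (y, x) ∈ q

/-- The height of the poset `(S, q)`: the maximal size of a chain. -/
noncomputable def heightP (S : Finset α) (q : Finset (α × α)) : ℕ :=
  (S.powerset.filter (isChainOn S q)).sup Finset.card


lemma mem_restrictRel {q : Finset (α × α)} {A : Finset α} {a b : α} :
    (a, b) ∈ restrictRel q A ↔ (a, b) ∈ q ∧ a ∈ A ∧ b ∈ A := by
  simp [restrictRel, and_assoc]

lemma mem_ucl {q : Finset (α × α)} {A : Finset α} {y : α} :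
    y ∈ ucl q A ↔ ∃ a ∈ A, (a, y) ∈ q := by
  constructor
  · intro h
    simp only [ucl, Finset.mem_image, Finset.mem_filter] at h
    obtain ⟨r, ⟨hr, hr1⟩, hr2⟩ := h
    refine ⟨r.1, hr1, ?_⟩
    rw [← hr2]; exact hr
  · rintro ⟨a, ha, hq⟩
    simp only [ucl, Finset.mem_image, Finset.mem_filter]
    exact ⟨(a, y), ⟨hq, ha⟩, rfl⟩

lemma mem_downsets {S : Finset α} {q : Finset (α × α)} {D : Finset α} :
    D ∈ downsets S q ↔ D ⊆ S ∧ ∀ y ∈ D, ∀ x : α, (x, y) ∈ q → x ∈ D := by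
  simp [downsets]

lemma mem_minset {S : Finset α} {q : Finset (α × α)} {a : α} :
    a ∈ minset S q ↔ a ∈ S ∧ ∀ y : α, (y, a) ∈ q → y = a := by
  simp [minset]

lemma mem_extPOs {M K : Finset α} {p q : Finset (α × α)} :
    q ∈ extPOs M K p ↔
      IsPOon (M ∪ K) q ∧ restrictRel q K = p ∧ minset (M ∪ K) q = M := by
  simp only [extPOs, Finset.mem_filter, Finset.mem_powerset, and_iff_right_iff_imp]
  intro h
  exact h.1.1

/-- Every element of a finite poset lies above a minimal element. -/
lemma below_min {S : Finset α} {q : Finset (α × α)} (hq : IsPOon S q) :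
    ∀ k ∈ S, ∃ m ∈ minset S q, (m, k) ∈ q := by
  obtain ⟨hsub, hrefl, htrans, hanti⟩ := hq
  suffices H : ∀ n : ℕ, ∀ k ∈ S, (S.filter fun y => (y, k) ∈ q).card ≤ n →
      ∃ m ∈ minset S q, (m, k) ∈ q by
    intro k hk; exact H _ k hk le_rfl
  intro n
  induction n with
  | zero =>
    intro k hk hcard
    have hk' : k ∈ S.filter fun y => (y, k) ∈ q := Finset.mem_filter.mpr ⟨hk, hrefl k hk⟩
    have := Finset.card_pos.mpr ⟨k, hk'⟩
    omega
  | succ n ih =>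
    intro k hk hcard
    by_cases hmin : ∀ y : α, (y, k) ∈ q → y = k
    · exact ⟨k, mem_minset.mpr ⟨hk, hmin⟩, hrefl k hk⟩
    · push_neg at hmin
      obtain ⟨y, hyk, hne⟩ := hmin
      have hyS : y ∈ S := (Finset.mem_product.mp (hsub hyk)).1
      have hss : (S.filter fun z => (z, y) ∈ q) ⊂ (S.filter fun z => (z, k) ∈ q) := by
        constructor
        · intro z hz
          simp only [Finset.mem_filter] at hz ⊢
          exact ⟨hz.1, htrans _ _ _ hz.2 hyk⟩
        · intro hle
          have : k ∈ S.filter fun z => (z, y) ∈ q :=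
            hle (Finset.mem_filter.mpr ⟨hk, hrefl k hk⟩)
          exact hne (hanti _ _ hyk (Finset.mem_filter.mp this).2)
      obtain ⟨m, hm, hmy⟩ := ih y hyS (by
        have := Finset.card_lt_card hss
        omega)
      exact ⟨m, hm, htrans _ _ _ hmy hyk⟩

lemma relabel_mem {M N K : Finset α} (σ τ : α → α)
    (hσ : ∀ a ∈ M, σ a ∈ N) (hτ : ∀ b ∈ N, τ b ∈ M)
    (hσK : ∀ k ∈ K, σ k = k) (hτK : ∀ k ∈ K, τ k = k)
    (hτσ : ∀ a ∈ M ∪ K, τ (σ a) = a) (hστ : ∀ b ∈ N ∪ K, σ (τ b) = b)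
    {p q : Finset (α × α)} (hq : q ∈ extPOs M K p) :
    q.image (Prod.map σ σ) ∈ extPOs N K p := by
  obtain ⟨⟨hsub, hrefl, htrans, hanti⟩, hres, hmin⟩ := mem_extPOs.mp hq
  have hσMK : ∀ a ∈ M ∪ K, σ a ∈ N ∪ K := by
    intro a ha
    rcases Finset.mem_union.mp ha with h | h
    · exact Finset.mem_union_left _ (hσ a h)
    · rw [hσK a h]; exact Finset.mem_union_right _ h
  have hτNK : ∀ b ∈ N ∪ K, τ b ∈ M ∪ K := by
    intro b hb
    rcases Finset.mem_union.mp hb with h | h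
    · exact Finset.mem_union_left _ (hτ b h)
    · rw [hτK b h]; exact Finset.mem_union_right _ h
  have hmem : ∀ u v : α, (u, v) ∈ q.image (Prod.map σ σ) ↔
      u ∈ N ∪ K ∧ v ∈ N ∪ K ∧ (τ u, τ v) ∈ q := by
    intro u v
    constructor
    · intro h
      obtain ⟨⟨a, b⟩, hr, hre⟩ := Finset.mem_image.mp h
      have hr1 : a ∈ M ∪ K := (Finset.mem_product.mp (hsub hr)).1
      have hr2 : b ∈ M ∪ K := (Finset.mem_product.mp (hsub hr)).2
      simp only [Prod.map_apply, Prod.mk.injEq] at hre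
      obtain ⟨h1, h2⟩ := hre
      subst h1; subst h2
      refine ⟨hσMK _ hr1, hσMK _ hr2, ?_⟩
      rw [hτσ _ hr1, hτσ _ hr2]
      exact hr
    · rintro ⟨hu, hv, h⟩
      refine Finset.mem_image.mpr ⟨(τ u, τ v), h, ?_⟩
      simp only [Prod.map_apply]
      rw [hστ _ hu, hστ _ hv]
  refine mem_extPOs.mpr ⟨⟨?_, ?_, ?_, ?_⟩, ?_, ?_⟩
  · rintro ⟨u, v⟩ h
    obtain ⟨hu, hv, -⟩ := (hmem u v).mp h
    exact Finset.mem_product.mpr ⟨hu, hv⟩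
  · intro u hu
    exact (hmem u u).mpr ⟨hu, hu, hrefl _ (hτNK u hu)⟩
  · intro u v w huv hvw
    obtain ⟨hu, hv, h1⟩ := (hmem u v).mp huv
    obtain ⟨-, hw, h2⟩ := (hmem v w).mp hvw
    exact (hmem u w).mpr ⟨hu, hw, htrans _ _ _ h1 h2⟩
  · intro u v huv hvu
    obtain ⟨hu, hv, h1⟩ := (hmem u v).mp huv
    obtain ⟨-, -, h2⟩ := (hmem v u).mp hvu
    have := hanti _ _ h1 h2
    calc u = σ (τ u) := (hστ _ hu).symm
    _ = σ (τ v) := by rw [this]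
    _ = v := hστ _ hv
  · rw [← hres]
    ext ⟨u, v⟩
    rw [mem_restrictRel, mem_restrictRel]
    constructor
    · rintro ⟨h, hu, hv⟩
      obtain ⟨-, -, h'⟩ := (hmem u v).mp h
      rw [hτK u hu, hτK v hv] at h'
      exact ⟨h', hu, hv⟩
    · rintro ⟨h, hu, hv⟩
      refine ⟨(hmem u v).mpr ⟨Finset.mem_union_right _ hu, Finset.mem_union_right _ hv, ?_⟩, hu, hv⟩
      rw [hτK u hu, hτK v hv]
      exact h
  · ext u
    rw [mem_minset]
    constructor
    · rintro ⟨hu, hmin'⟩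
      have hτu : τ u ∈ M := by
        rw [← hmin, mem_minset]
        refine ⟨hτNK u hu, ?_⟩
        intro z hz
        have hz1 : z ∈ M ∪ K := (Finset.mem_product.mp (hsub hz)).1
        have : (σ z, u) ∈ q.image (Prod.map σ σ) := by
          rw [hmem]
          refine ⟨hσMK _ hz1, hu, ?_⟩
          rw [hτσ _ hz1]
          exact hz
        have heq : σ z = u := hmin' _ this
        calc z = τ (σ z) := (hτσ _ hz1).symm
        _ = τ u := by rw [heq]
      have : u = σ (τ u) := (hστ _ hu).symm
      rw [this]
      exact hσ _ hτu
    · intro huN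
      have hu : u ∈ N ∪ K := Finset.mem_union_left _ huN
      refine ⟨hu, ?_⟩
      intro y hy
      obtain ⟨hyN, -, h⟩ := (hmem y u).mp hy
      have hτuM : τ u ∈ minset (M ∪ K) q := by rw [hmin]; exact hτ u huN
      have := (mem_minset.mp hτuM).2 _ h
      calc y = σ (τ y) := (hστ _ hyN).symm
      _ = σ (τ u) := by rw [this]
      _ = u := hστ _ hu

lemma relabel_card {M N K : Finset α} (hMK : Disjoint M K) (hNK : Disjoint N K)
    (hcard : M.card = N.card) (p : Finset (α × α)) :
    (extPOs M K p).card = (extPOs N K p).card := by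
  classical
  let e : {x // x ∈ M} ≃ {x // x ∈ N} := Finset.equivOfCardEq hcard
  set σ : α → α := fun a => if h : a ∈ M then (e ⟨a, h⟩ : α) else a with hσdef
  set τ : α → α := fun b => if h : b ∈ N then (e.symm ⟨b, h⟩ : α) else b with hτdef
  have hσ : ∀ a ∈ M, σ a ∈ N := by
    intro a ha; simp only [hσdef, dif_pos ha]; exact (e ⟨a, ha⟩).2
  have hτ : ∀ b ∈ N, τ b ∈ M := by
    intro b hb; simp only [hτdef, dif_pos hb]; exact (e.symm ⟨b, hb⟩).2
  have hσK : ∀ k ∈ K, σ k = k := by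
    intro k hk
    simp only [hσdef, dif_neg (Finset.disjoint_right.mp hMK hk)]
  have hτK : ∀ k ∈ K, τ k = k := by
    intro k hk
    simp only [hτdef, dif_neg (Finset.disjoint_right.mp hNK hk)]
  have hτσ : ∀ a ∈ M ∪ K, τ (σ a) = a := by
    intro a ha
    rcases Finset.mem_union.mp ha with h | h
    · have h1 : σ a = (e ⟨a, h⟩ : α) := by simp only [hσdef, dif_pos h]
      have h2 : σ a ∈ N := by rw [h1]; exact (e ⟨a, h⟩).2
      simp only [hτdef, dif_pos h2]
      have : (⟨σ a, h2⟩ : {x // x ∈ N}) = e ⟨a, h⟩ := Subtype.ext h1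
      rw [this, Equiv.symm_apply_apply]
    · rw [hσK a h]; exact hτK a h
  have hστ : ∀ b ∈ N ∪ K, σ (τ b) = b := by
    intro b hb
    rcases Finset.mem_union.mp hb with h | h
    · have h1 : τ b = (e.symm ⟨b, h⟩ : α) := by simp only [hτdef, dif_pos h]
      have h2 : τ b ∈ M := by rw [h1]; exact (e.symm ⟨b, h⟩).2
      simp only [hσdef, dif_pos h2]
      have : (⟨τ b, h2⟩ : {x // x ∈ M}) = e.symm ⟨b, h⟩ := Subtype.ext h1
      rw [this, Equiv.apply_symm_apply]
    · rw [hτK b h]; exact hσK b h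
  refine Finset.card_bij' (fun q _ => q.image (Prod.map σ σ))
    (fun q _ => q.image (Prod.map τ τ)) ?_ ?_ ?_ ?_
  · intro q hq
    exact relabel_mem σ τ hσ hτ hσK hτK hτσ hστ hq
  · intro q hq
    exact relabel_mem τ σ hτ hσ hτK hσK hστ hτσ hq
  · intro q hq
    obtain ⟨⟨hsub, -, -, -⟩, -, -⟩ := mem_extPOs.mp hq
    show Finset.image (Prod.map τ τ) (Finset.image (Prod.map σ σ) q) = q
    rw [Finset.image_image]
    have : ∀ r ∈ q, (Prod.map τ τ ∘ Prod.map σ σ) r = r := by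
      rintro ⟨a, b⟩ hr
      obtain ⟨ha, hb⟩ := Finset.mem_product.mp (hsub hr)
      simp only [Function.comp_apply, Prod.map_apply]
      rw [hτσ _ ha, hτσ _ hb]
    rw [Finset.image_congr (fun r hr => this r hr), Finset.image_id']
  · intro q hq
    obtain ⟨⟨hsub, -, -, -⟩, -, -⟩ := mem_extPOs.mp hq
    show Finset.image (Prod.map σ σ) (Finset.image (Prod.map τ τ) q) = q
    rw [Finset.image_image]
    have : ∀ r ∈ q, (Prod.map σ σ ∘ Prod.map τ τ) r = r := by
      rintro ⟨a, b⟩ hr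
      obtain ⟨ha, hb⟩ := Finset.mem_product.mp (hsub hr)
      simp only [Function.comp_apply, Prod.map_apply]
      rw [hστ _ ha, hστ _ hb]
    rw [Finset.image_congr (fun r hr => this r hr), Finset.image_id']

noncomputable def Dof (M K : Finset α) (x : α) (q : Finset (α × α)) : Finset α :=
  K.filter fun k => (x, k) ∈ q ∧ ∀ m ∈ M, (m, k) ∉ q

noncomputable def Gof (x : α) (p : Finset (α × α)) (K E : Finset α)
    (R : Finset (α × α)) : Finset (α × α) :=
  R ∪ p ∪ {(x, x)} ∪ ((K \ E).image fun u => (x, u))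

lemma mem_Dof {M K : Finset α} {x : α} {q : Finset (α × α)} {k : α} :
    k ∈ Dof M K x q ↔ k ∈ K ∧ (x, k) ∈ q ∧ ∀ m ∈ M, (m, k) ∉ q := by
  simp [Dof, and_assoc]

lemma mem_Gof {x : α} {p : Finset (α × α)} {K E : Finset α} {R : Finset (α × α)}
    {a b : α} :
    (a, b) ∈ Gof x p K E R ↔
      (a, b) ∈ R ∨ (a, b) ∈ p ∨ (a = x ∧ b = x) ∨ (a = x ∧ b ∈ K \ E) := by
  simp only [Gof, Finset.mem_union, Finset.mem_singleton, Finset.mem_image,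
    Prod.mk.injEq, Prod.ext_iff]
  constructor
  · rintro (((h | h) | h) | ⟨u, hu, h1, h2⟩)
    · exact Or.inl h
    · exact Or.inr (Or.inl h)
    · exact Or.inr (Or.inr (Or.inl h))
    · exact Or.inr (Or.inr (Or.inr ⟨h1.symm, h2 ▸ hu⟩))
  · rintro (h | h | h | ⟨h1, h2⟩)
    · exact Or.inl (Or.inl (Or.inl h))
    · exact Or.inl (Or.inl (Or.inr h))
    · exact Or.inl (Or.inr h)
    · exact Or.inr ⟨b, h2, h1.symm, rfl⟩

lemma ucl_subset {K : Finset α} {p : Finset (α × α)} (hp : p ⊆ K ×ˢ K) (D : Finset α) :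
    ucl p D ⊆ K := by
  intro y hy
  obtain ⟨a, _, hq⟩ := mem_ucl.mp hy
  exact (Finset.mem_product.mp (hp hq)).2

lemma subset_ucl {K : Finset α} {p : Finset (α × α)} (hp : IsPOon K p) {D : Finset α}
    (hDK : D ⊆ K) : D ⊆ ucl p D :=
  fun d hd => mem_ucl.mpr ⟨d, hd, hp.2.1 d (hDK hd)⟩

lemma claim1 {M K : Finset α} {x : α} {p : Finset (α × α)}
    {q : Finset (α × α)} (hq : q ∈ extPOs (insert x M) K p) :
    Dof M K x q ∈ downsets K p := by
  obtain ⟨⟨hsub, hrefl, htrans, hanti⟩, hres, hmin⟩ := mem_extPOs.mp hq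
  have hpq : p ⊆ q := by rw [← hres]; intro r hr; exact (Finset.mem_filter.mp hr).1
  refine mem_downsets.mpr ⟨Finset.filter_subset _ _, ?_⟩
  intro k hk k' hk'
  obtain ⟨hkK, hxk, hMk⟩ := mem_Dof.mp hk
  have hk'K : k' ∈ K := by
    have hk'' := hk'
    rw [← hres] at hk''
    exact (mem_restrictRel.mp hk'').2.1
  have hk'k : (k', k) ∈ q := hpq hk'
  refine mem_Dof.mpr ⟨hk'K, ?_, ?_⟩
  · obtain ⟨m, hm, hmk'⟩ := below_min (mem_extPOs.mp hq).1 k'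
      (Finset.mem_union_right _ hk'K)
    rw [hmin] at hm
    rcases Finset.mem_insert.mp hm with h | h
    · rw [← h]; exact hmk'
    · exact absurd (htrans _ _ _ hmk' hk'k) (hMk m h)
  · intro m hm hmk'
    exact hMk m hm (htrans _ _ _ hmk' hk'k)

lemma fwd {M K : Finset α} (hMK : Disjoint M K) {x : α} (hxM : x ∉ M) (hxK : x ∉ K)
    {p : Finset (α × α)} (hp : IsPOon K p) {D : Finset α} (hD : D ∈ downsets K p)
    {q : Finset (α × α)} (hq : q ∈ extPOs (insert x M) K p)
    (hDq : Dof M K x q = D) :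
    ((K \ ucl p D).filter fun k => (x, k) ∉ q) ∈
        downsets (K \ ucl p D) (restrictRel p (K \ ucl p D)) ∧
      restrictRel q (M ∪ (K \ D)) ∈ extPOs M (K \ D) (restrictRel p (K \ D)) ∧
      Gof x p K ((K \ ucl p D).filter fun k => (x, k) ∉ q)
        (restrictRel q (M ∪ (K \ D))) = q := by
  obtain ⟨⟨hsub, hrefl, htrans, hanti⟩, hres, hmin⟩ := mem_extPOs.mp hq
  obtain ⟨hDK, hDdown⟩ := mem_downsets.mp hD
  have hpq : p ⊆ q := by rw [← hres]; intro r hr; exact (Finset.mem_filter.mp hr).1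
  have hpmem : ∀ a b : α, (a, b) ∈ p ↔ (a, b) ∈ q ∧ a ∈ K ∧ b ∈ K := by
    intro a b; rw [← hres, mem_restrictRel]
  have hDmem : ∀ k, k ∈ D ↔ k ∈ K ∧ (x, k) ∈ q ∧ ∀ m ∈ M, (m, k) ∉ q := by
    intro k; rw [← hDq, mem_Dof]
  have habove : ∀ k ∈ K, (x, k) ∈ q ∨ ∃ m ∈ M, (m, k) ∈ q := by
    intro k hk
    obtain ⟨m, hm, hmk⟩ := below_min (mem_extPOs.mp hq).1 k (Finset.mem_union_right _ hk)
    rw [hmin] at hm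
    rcases Finset.mem_insert.mp hm with h | h
    · exact Or.inl (h ▸ hmk)
    · exact Or.inr ⟨m, h, hmk⟩
  have hxq : ∀ k ∈ ucl p D, (x, k) ∈ q := by
    intro k hk
    obtain ⟨d, hd, hdk⟩ := mem_ucl.mp hk
    have : (x, d) ∈ q := ((hDmem d).mp hd).2.1
    exact htrans _ _ _ this (hpq hdk)
  have hKA : ∀ a, a ∈ K → a ∈ M ∪ (K \ D) → a ∈ K \ D := by
    intro a haK ha
    rcases Finset.mem_union.mp ha with h | h
    · exact absurd haK (Finset.disjoint_left.mp hMK h)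
    · exact h
  have hminq : ∀ a ∈ insert x M, ∀ y : α, (y, a) ∈ q → y = a := by
    intro a ha
    rw [← hmin] at ha
    exact (mem_minset.mp ha).2
  refine ⟨?_, ?_, ?_⟩
  · -- E is a downset
    refine mem_downsets.mpr ⟨Finset.filter_subset _ _, ?_⟩
    intro k hk z hz
    obtain ⟨hk1, hk2⟩ := Finset.mem_filter.mp hk
    obtain ⟨hzp, hz1, hz2⟩ := mem_restrictRel.mp hz
    refine Finset.mem_filter.mpr ⟨hz1, ?_⟩
    intro hxz
    exact hk2 (htrans _ _ _ hxz (hpq hzp))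
  · -- R is in extPOs M (K \ D)
    refine mem_extPOs.mpr ⟨⟨?_, ?_, ?_, ?_⟩, ?_, ?_⟩
    · rintro ⟨a, b⟩ h
      obtain ⟨-, ha, hb⟩ := mem_restrictRel.mp h
      exact Finset.mem_product.mpr ⟨ha, hb⟩
    · intro a ha
      refine mem_restrictRel.mpr ⟨?_, ha, ha⟩
      apply hrefl
      rcases Finset.mem_union.mp ha with h | h
      · exact Finset.mem_union_left _ (Finset.mem_insert_of_mem h)
      · exact Finset.mem_union_right _ (Finset.mem_sdiff.mp h).1
    · intro a b c hab hbc
      obtain ⟨h1, ha, -⟩ := mem_restrictRel.mp hab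
      obtain ⟨h2, -, hc⟩ := mem_restrictRel.mp hbc
      exact mem_restrictRel.mpr ⟨htrans _ _ _ h1 h2, ha, hc⟩
    · intro a b hab hba
      exact hanti _ _ (mem_restrictRel.mp hab).1 (mem_restrictRel.mp hba).1
    · ext ⟨a, b⟩
      simp only [mem_restrictRel, hpmem a b, Finset.mem_sdiff, Finset.mem_union]
      tauto
    · ext a
      rw [mem_minset]
      constructor
      · rintro ⟨haA, hm⟩
        rcases Finset.mem_union.mp haA with h | h
        · exact h
        · exfalso
          obtain ⟨haK, haD⟩ := Finset.mem_sdiff.mp h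
          rcases habove a haK with hxa | ⟨m, hmM, hma⟩
          · refine haD ((hDmem a).mpr ⟨haK, hxa, ?_⟩)
            intro m hmM hma
            have : m = a := hm m (mem_restrictRel.mpr
              ⟨hma, Finset.mem_union_left _ hmM, haA⟩)
            exact Finset.disjoint_left.mp hMK (this ▸ hmM) haK
          · have : m = a := hm m (mem_restrictRel.mpr
              ⟨hma, Finset.mem_union_left _ hmM, haA⟩)
            exact Finset.disjoint_left.mp hMK (this ▸ hmM) haK
      · intro haM
        refine ⟨Finset.mem_union_left _ haM, ?_⟩
        intro y hy
        exact hminq a (Finset.mem_insert_of_mem haM) y (mem_restrictRel.mp hy).1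
  · -- G reconstructs q
    ext ⟨a, b⟩
    rw [mem_Gof]
    constructor
    · rintro (h | h | ⟨h1, h2⟩ | ⟨h1, h2⟩)
      · exact (mem_restrictRel.mp h).1
      · exact hpq h
      · rw [h1, h2]
        exact hrefl x (Finset.mem_union_left _ (Finset.mem_insert_self x M))
      · rw [h1]
        obtain ⟨hbK, hbE⟩ := Finset.mem_sdiff.mp h2
        by_cases hbu : b ∈ ucl p D
        · exact hxq b hbu
        · by_contra hxb
          exact hbE (Finset.mem_filter.mpr ⟨Finset.mem_sdiff.mpr ⟨hbK, hbu⟩, hxb⟩)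
    · intro h
      have hco := Finset.mem_product.mp (hsub h)
      rcases Finset.mem_union.mp hco.1 with ha | haK
      · rcases Finset.mem_insert.mp ha with hax | haM
        · -- a = x
          subst hax
          rcases Finset.mem_union.mp hco.2 with hb | hbK
          · rcases Finset.mem_insert.mp hb with hbx | hbM
            · exact Or.inr (Or.inr (Or.inl ⟨rfl, hbx⟩))
            · exact absurd (hminq b (Finset.mem_insert_of_mem hbM) a h).symm
                (fun hh => hxM (hh ▸ hbM))
          · refine Or.inr (Or.inr (Or.inr ⟨rfl, Finset.mem_sdiff.mpr ⟨hbK, ?_⟩⟩))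
            intro hbE
            exact (Finset.mem_filter.mp hbE).2 h
        · -- a ∈ M
          rcases Finset.mem_union.mp hco.2 with hb | hbK
          · rcases Finset.mem_insert.mp hb with hbx | hbM
            · have hbx' : b = x := hbx
              rw [hbx'] at h
              have hax := hminq x (Finset.mem_insert_self x M) a h
              exact absurd (hax ▸ haM) hxM
            · exact Or.inl (mem_restrictRel.mpr
                ⟨h, Finset.mem_union_left _ haM, Finset.mem_union_left _ hbM⟩)
          · have hbD : b ∉ D := fun hbD => ((hDmem b).mp hbD).2.2 a haM h
            exact Or.inl (mem_restrictRel.mpr ⟨h, Finset.mem_union_left _ haM,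
              Finset.mem_union_right _ (Finset.mem_sdiff.mpr ⟨hbK, hbD⟩)⟩)
      · -- a ∈ K
        rcases Finset.mem_union.mp hco.2 with hb | hbK
        · rcases Finset.mem_insert.mp hb with hbx | hbM
          · have hbx' : b = x := hbx
            rw [hbx'] at h
            have hax := hminq x (Finset.mem_insert_self x M) a h
            exact absurd (hax ▸ haK) hxK
          · have := hminq b (Finset.mem_insert_of_mem hbM) a h
            exact absurd haK (Finset.disjoint_left.mp hMK (this ▸ hbM))
        · exact Or.inr (Or.inl ((hpmem a b).mpr ⟨h, haK, hbK⟩))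

lemma bwd {M K : Finset α} (hMK : Disjoint M K) {x : α} (hxM : x ∉ M) (hxK : x ∉ K)
    {p : Finset (α × α)} (hp : IsPOon K p) {D : Finset α} (hD : D ∈ downsets K p)
    {E : Finset α} (hE : E ∈ downsets (K \ ucl p D) (restrictRel p (K \ ucl p D)))
    {R : Finset (α × α)} (hR : R ∈ extPOs M (K \ D) (restrictRel p (K \ D))) :
    Gof x p K E R ∈ extPOs (insert x M) K p ∧
      Dof M K x (Gof x p K E R) = D ∧
      ((K \ ucl p D).filter fun k => (x, k) ∉ Gof x p K E R) = E ∧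
      restrictRel (Gof x p K E R) (M ∪ (K \ D)) = R := by
  obtain ⟨hpsub, hprefl, hptrans, hpanti⟩ := hp
  obtain ⟨hDK, hDdown⟩ := mem_downsets.mp hD
  obtain ⟨hEsub, hEdown⟩ := mem_downsets.mp hE
  obtain ⟨⟨hRsub, hRrefl, hRtrans, hRanti⟩, hRres, hRmin⟩ := mem_extPOs.mp hR
  set G := Gof x p K E R with hGdef
  -- basic coordinate facts
  have hpK : ∀ a b : α, (a, b) ∈ p → a ∈ K ∧ b ∈ K := by
    intro a b h; exact Finset.mem_product.mp (hpsub h)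
  have hRco : ∀ a b : α, (a, b) ∈ R → a ∈ M ∪ (K \ D) ∧ b ∈ M ∪ (K \ D) := by
    intro a b h; exact Finset.mem_product.mp (hRsub h)
  have hxKD : x ∉ M ∪ (K \ D) := by
    intro h
    rcases Finset.mem_union.mp h with h | h
    · exact hxM h
    · exact hxK (Finset.mem_sdiff.mp h).1
  have hRnx1 : ∀ b : α, (x, b) ∈ R → False := fun b h => hxKD (hRco x b h).1
  have hRnx2 : ∀ a : α, (a, x) ∈ R → False := fun a h => hxKD (hRco a x h).2
  have hKA : ∀ a, a ∈ K → a ∈ M ∪ (K \ D) → a ∈ K \ D := by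
    intro a haK ha
    rcases Finset.mem_union.mp ha with h | h
    · exact absurd haK (Finset.disjoint_left.mp hMK h)
    · exact h
  have hRKp : ∀ a b : α, (a, b) ∈ R → a ∈ K → b ∈ K → (a, b) ∈ p := by
    intro a b h haK hbK
    have h' : (a, b) ∈ restrictRel R (K \ D) := mem_restrictRel.mpr
      ⟨h, hKA a haK (hRco a b h).1, hKA b hbK (hRco a b h).2⟩
    rw [hRres] at h'
    exact (mem_restrictRel.mp h').1
  have hpR : ∀ a b : α, (a, b) ∈ p → a ∈ K \ D → b ∈ K \ D → (a, b) ∈ R := by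
    intro a b h ha hb
    have h' : (a, b) ∈ restrictRel p (K \ D) := mem_restrictRel.mpr ⟨h, ha, hb⟩
    rw [← hRres] at h'
    exact (mem_restrictRel.mp h').1
  have hRnoM2 : ∀ a b : α, (a, b) ∈ R → b ∈ M → a = b := by
    intro a b h hbM
    have : b ∈ minset (M ∪ (K \ D)) R := by rw [hRmin]; exact hbM
    exact (mem_minset.mp this).2 a h
  have huclE : ∀ k ∈ ucl p D, k ∉ E := by
    intro k hk hkE
    exact (Finset.mem_sdiff.mp (hEsub hkE)).2 hk
  have hDnE : ∀ d ∈ D, d ∈ K \ E := by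
    intro d hd
    exact Finset.mem_sdiff.mpr ⟨hDK hd, huclE d (subset_ucl ⟨hpsub, hprefl, hptrans, hpanti⟩ hDK hd)⟩
  have hGx : ∀ b : α, (x, b) ∈ G ↔ b = x ∨ b ∈ K \ E := by
    intro b
    rw [hGdef, mem_Gof]
    constructor
    · rintro (h | h | ⟨-, h⟩ | ⟨-, h⟩)
      · exact absurd h (fun h => hRnx1 b h)
      · exact absurd (hpK x b h).1 hxK
      · exact Or.inl h
      · exact Or.inr h
    · rintro (h | h)
      · exact Or.inr (Or.inr (Or.inl ⟨rfl, h⟩))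
      · exact Or.inr (Or.inr (Or.inr ⟨rfl, h⟩))
  have hGnotx : ∀ a b : α, (a, b) ∈ G → b = x → a = x := by
    intro a b h hbx
    rw [hGdef, mem_Gof] at h
    rcases h with h | h | ⟨h, -⟩ | ⟨h, hb⟩
    · rw [hbx] at h; exact absurd h (fun h => hRnx2 a h)
    · rw [hbx] at h; exact absurd (hpK a x h).2 hxK
    · exact h
    · rw [hbx] at hb; exact absurd (Finset.mem_sdiff.mp hb).1 hxK
  have hstep : ∀ b c : α, b ∈ K \ E → (b, c) ∈ p → c ∈ K \ E := by
    intro b c hb hbc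
    obtain ⟨hbK, hbE⟩ := Finset.mem_sdiff.mp hb
    have hcK : c ∈ K := (hpK b c hbc).2
    refine Finset.mem_sdiff.mpr ⟨hcK, ?_⟩
    intro hcE
    have hcu : c ∉ ucl p D := (Finset.mem_sdiff.mp (hEsub hcE)).2
    have hbu : b ∉ ucl p D := by
      intro hbu
      obtain ⟨d, hd, hdb⟩ := mem_ucl.mp hbu
      exact hcu (mem_ucl.mpr ⟨d, hd, hptrans _ _ _ hdb hbc⟩)
    have : (b, c) ∈ restrictRel p (K \ ucl p D) := mem_restrictRel.mpr
      ⟨hbc, Finset.mem_sdiff.mpr ⟨hbK, hbu⟩, Finset.mem_sdiff.mpr ⟨hcK, hcu⟩⟩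
    exact hbE (hEdown c hcE b this)
  have hGco : ∀ a b : α, (a, b) ∈ G → a ∈ insert x M ∪ K ∧ b ∈ insert x M ∪ K := by
    intro a b h
    rw [hGdef, mem_Gof] at h
    have hlift : ∀ c, c ∈ M ∪ (K \ D) → c ∈ insert x M ∪ K := by
      intro c hc
      rcases Finset.mem_union.mp hc with h | h
      · exact Finset.mem_union_left _ (Finset.mem_insert_of_mem h)
      · exact Finset.mem_union_right _ (Finset.mem_sdiff.mp h).1
    rcases h with h | h | ⟨h1, h2⟩ | ⟨h1, h2⟩
    · exact ⟨hlift a (hRco a b h).1, hlift b (hRco a b h).2⟩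
    · exact ⟨Finset.mem_union_right _ (hpK a b h).1, Finset.mem_union_right _ (hpK a b h).2⟩
    · rw [h1, h2]
      exact ⟨Finset.mem_union_left _ (Finset.mem_insert_self x M),
        Finset.mem_union_left _ (Finset.mem_insert_self x M)⟩
    · rw [h1]
      exact ⟨Finset.mem_union_left _ (Finset.mem_insert_self x M),
        Finset.mem_union_right _ (Finset.mem_sdiff.mp h2).1⟩
  -- mixed transitivity steps
  have hRp_trans : ∀ a b c : α, (a, b) ∈ R → (b, c) ∈ p → (a, c) ∈ G := by
    intro a b c hab hbc
    have hbK : b ∈ K := (hpK b c hbc).1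
    have hcK : c ∈ K := (hpK b c hbc).2
    have hbKD : b ∈ K \ D := hKA b hbK (hRco a b hab).2
    have hcD : c ∉ D := by
      intro hcD
      exact (Finset.mem_sdiff.mp hbKD).2 (hDdown c hcD b hbc)
    have hbcR : (b, c) ∈ R := hpR b c hbc hbKD (Finset.mem_sdiff.mpr ⟨hcK, hcD⟩)
    rw [hGdef, mem_Gof]
    exact Or.inl (hRtrans _ _ _ hab hbcR)
  have hpR_trans : ∀ a b c : α, (a, b) ∈ p → (b, c) ∈ R → (a, c) ∈ G := by
    intro a b c hab hbc
    have hbK : b ∈ K := (hpK a b hab).2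
    have hbKD : b ∈ K \ D := hKA b hbK (hRco b c hbc).1
    rw [hGdef, mem_Gof]
    rcases Finset.mem_union.mp (hRco b c hbc).2 with hcM | hcKD
    · have : b = c := hRnoM2 b c hbc hcM
      rw [← this]
      exact Or.inr (Or.inl hab)
    · have hbcp : (b, c) ∈ p := hRKp b c hbc hbK (Finset.mem_sdiff.mp hcKD).1
      exact Or.inr (Or.inl (hptrans _ _ _ hab hbcp))
  -- (d) : G ∈ extPOs (insert x M) K p
  have hGmem : G ∈ extPOs (insert x M) K p := by
    refine mem_extPOs.mpr ⟨⟨?_, ?_, ?_, ?_⟩, ?_, ?_⟩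
    · rintro ⟨a, b⟩ h
      exact Finset.mem_product.mpr (hGco a b h)
    · intro a ha
      rw [hGdef, mem_Gof]
      rcases Finset.mem_union.mp ha with h | h
      · rcases Finset.mem_insert.mp h with h | h
        · exact Or.inr (Or.inr (Or.inl ⟨h, h⟩))
        · exact Or.inl (hRrefl a (Finset.mem_union_left _ h))
      · exact Or.inr (Or.inl (hprefl a h))
    · intro a b c hab hbc
      rw [hGdef, mem_Gof] at hab hbc
      show (a, c) ∈ G
      rcases hab with h1 | h1 | ⟨ha, hb⟩ | ⟨ha, hb⟩
      · rcases hbc with h2 | h2 | ⟨hb2, -⟩ | ⟨hb2, -⟩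
        · rw [hGdef, mem_Gof]; exact Or.inl (hRtrans _ _ _ h1 h2)
        · exact hRp_trans a b c h1 h2
        · rw [hb2] at h1; exact absurd h1 (fun h => hRnx2 a h)
        · rw [hb2] at h1; exact absurd h1 (fun h => hRnx2 a h)
      · rcases hbc with h2 | h2 | ⟨hb2, -⟩ | ⟨hb2, -⟩
        · exact hpR_trans a b c h1 h2
        · rw [hGdef, mem_Gof]; exact Or.inr (Or.inl (hptrans _ _ _ h1 h2))
        · rw [hb2] at h1; exact absurd (hpK a x h1).2 hxK
        · rw [hb2] at h1; exact absurd (hpK a x h1).2 hxK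
      · -- a = x, b = x
        rw [ha, ← hb, hGdef, mem_Gof]
        exact hbc
      · -- a = x, b ∈ K \ E
        rcases hbc with h2 | h2 | ⟨hb2, -⟩ | ⟨hb2, -⟩
        · rcases Finset.mem_union.mp (hRco b c h2).2 with hcM | hcKD
          · have : b = c := hRnoM2 b c h2 hcM
            rw [hGdef, mem_Gof]
            exact Or.inr (Or.inr (Or.inr ⟨ha, this ▸ hb⟩))
          · have hbcp : (b, c) ∈ p := hRKp b c h2 (Finset.mem_sdiff.mp hb).1
              (Finset.mem_sdiff.mp hcKD).1
            rw [hGdef, mem_Gof]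
            exact Or.inr (Or.inr (Or.inr ⟨ha, hstep b c hb hbcp⟩))
        · rw [hGdef, mem_Gof]
          exact Or.inr (Or.inr (Or.inr ⟨ha, hstep b c hb h2⟩))
        · rw [hb2] at hb; exact absurd (Finset.mem_sdiff.mp hb).1 hxK
        · rw [hb2] at hb; exact absurd (Finset.mem_sdiff.mp hb).1 hxK
    · intro a b hab hba
      by_cases hax : a = x
      · rw [hax] at hba ⊢
        exact (hGnotx b x hba rfl) ▸ rfl
      · by_cases hbx : b = x
        · exact absurd (hGnotx a b hab hbx) hax
        · rw [hGdef, mem_Gof] at hab hba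
          rcases hab with h1 | h1 | ⟨h, -⟩ | ⟨h, -⟩
          · rcases hba with h2 | h2 | ⟨hh, -⟩ | ⟨hh, -⟩
            · exact hRanti _ _ h1 h2
            · have haK := (hpK b a h2).2
              have hbK := (hpK b a h2).1
              exact hpanti _ _ (hRKp a b h1 haK hbK) h2
            · exact absurd hh hbx
            · exact absurd hh hbx
          · rcases hba with h2 | h2 | ⟨hh, -⟩ | ⟨hh, -⟩
            · have haK := (hpK a b h1).1
              have hbK := (hpK a b h1).2
              exact hpanti _ _ h1 (hRKp b a h2 hbK haK)
            · exact hpanti _ _ h1 h2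
            · exact absurd hh hbx
            · exact absurd hh hbx
          · exact absurd h hax
          · exact absurd h hax
    · -- restrictRel G K = p
      ext ⟨a, b⟩
      rw [mem_restrictRel]
      constructor
      · rintro ⟨h, haK, hbK⟩
        rw [hGdef, mem_Gof] at h
        rcases h with h | h | ⟨h, -⟩ | ⟨h, -⟩
        · exact hRKp a b h haK hbK
        · exact h
        · rw [h] at haK; exact absurd haK hxK
        · rw [h] at haK; exact absurd haK hxK
      · intro h
        refine ⟨?_, (hpK a b h).1, (hpK a b h).2⟩
        rw [hGdef, mem_Gof]
        exact Or.inr (Or.inl h)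
    · -- minset
      ext a
      rw [mem_minset]
      constructor
      · rintro ⟨ha, hm⟩
        rcases Finset.mem_union.mp ha with h | h
        · exact h
        · -- a ∈ K
          by_cases haD : a ∈ D
          · have : (x, a) ∈ G := (hGx a).mpr (Or.inr (hDnE a haD))
            have := hm x this
            rw [← this]
            exact Finset.mem_insert_self x M
          · have haKD : a ∈ M ∪ (K \ D) :=
              Finset.mem_union_right _ (Finset.mem_sdiff.mpr ⟨h, haD⟩)
            obtain ⟨m, hmmin, hma⟩ := below_min ⟨hRsub, hRrefl, hRtrans, hRanti⟩ a haKD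
            rw [hRmin] at hmmin
            have hmaG : (m, a) ∈ G := by rw [hGdef, mem_Gof]; exact Or.inl hma
            have := hm m hmaG
            rw [← this]
            exact Finset.mem_insert_of_mem hmmin
      · intro ha
        rcases Finset.mem_insert.mp ha with h | h
        · refine ⟨Finset.mem_union_left _ ha, ?_⟩
          intro y hy
          rw [h] at hy ⊢
          exact hGnotx y x hy rfl
        · refine ⟨Finset.mem_union_left _ ha, ?_⟩
          intro y hy
          rw [hGdef, mem_Gof] at hy
          rcases hy with hy | hy | ⟨hy1, hy2⟩ | ⟨hy1, hy2⟩
          · exact hRnoM2 y a hy h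
          · exact absurd (hpK y a hy).2 (Finset.disjoint_left.mp hMK h)
          · rw [hy2] at h; exact absurd h hxM
          · exact absurd (Finset.mem_sdiff.mp hy2).1
              (Finset.disjoint_left.mp hMK h)
  refine ⟨hGmem, ?_, ?_, ?_⟩
  · -- Dof G = D
    ext k
    rw [mem_Dof]
    constructor
    · rintro ⟨hkK, hxk, hMk⟩
      by_contra hkD
      have hkKD : k ∈ M ∪ (K \ D) :=
        Finset.mem_union_right _ (Finset.mem_sdiff.mpr ⟨hkK, hkD⟩)
      obtain ⟨m, hmmin, hmk⟩ := below_min ⟨hRsub, hRrefl, hRtrans, hRanti⟩ k hkKD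
      rw [hRmin] at hmmin
      have : (m, k) ∈ G := by rw [hGdef, mem_Gof]; exact Or.inl hmk
      exact hMk m hmmin this
    · intro hkD
      refine ⟨hDK hkD, (hGx k).mpr (Or.inr (hDnE k hkD)), ?_⟩
      intro m hmM hmk
      rw [hGdef, mem_Gof] at hmk
      rcases hmk with h | h | ⟨h, -⟩ | ⟨h, -⟩
      · have := (hRco m k h).2
        rcases Finset.mem_union.mp this with hh | hh
        · exact Finset.disjoint_left.mp hMK hh (hDK hkD)
        · exact (Finset.mem_sdiff.mp hh).2 hkD
      · exact Finset.disjoint_left.mp hMK hmM (hpK m k h).1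
      · rw [h] at hmM; exact hxM hmM
      · rw [h] at hmM; exact hxM hmM
  · -- E recovered
    ext k
    rw [Finset.mem_filter]
    constructor
    · rintro ⟨hk, hxk⟩
      by_contra hkE
      have hkK : k ∈ K := (Finset.mem_sdiff.mp hk).1
      exact hxk ((hGx k).mpr (Or.inr (Finset.mem_sdiff.mpr ⟨hkK, hkE⟩)))
    · intro hkE
      refine ⟨hEsub hkE, ?_⟩
      intro hxk
      rcases (hGx k).mp hxk with h | h
      · rw [h] at hkE
        exact hxK (Finset.mem_sdiff.mp (hEsub hkE)).1
      · exact (Finset.mem_sdiff.mp h).2 hkE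
  · -- R recovered
    ext ⟨a, b⟩
    rw [mem_restrictRel]
    constructor
    · rintro ⟨h, ha, hb⟩
      rw [hGdef, mem_Gof] at h
      rcases h with h | h | ⟨h1, -⟩ | ⟨h1, -⟩
      · exact h
      · exact hpR a b h (hKA a (hpK a b h).1 ha) (hKA b (hpK a b h).2 hb)
      · rw [h1] at ha; exact absurd ha hxKD
      · rw [h1] at ha; exact absurd ha hxKD
    · intro h
      refine ⟨?_, (hRco a b h).1, (hRco a b h).2⟩
      rw [hGdef, mem_Gof]
      exact Or.inl h

lemma main_step {M K : Finset α} (hMK : Disjoint M K) {x : α} (hxM : x ∉ M) (hxK : x ∉ K)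
    {p : Finset (α × α)} (hp : IsPOon K p) :
    (extPOs (insert x M) K p).card =
      ∑ D ∈ downsets K p,
        dnum (K \ ucl p D) (restrictRel p (K \ ucl p D)) *
          (extPOs M (K \ D) (restrictRel p (K \ D))).card := by
  rw [Finset.card_eq_sum_card_fiberwise
    (f := fun q => Dof M K x q) (t := downsets K p) (fun q hq => claim1 hq)]
  refine Finset.sum_congr rfl ?_
  intro D hD
  rw [dnum, ← Finset.card_product]
  refine Finset.card_bij'
    (fun q _ => (((K \ ucl p D).filter fun k => (x, k) ∉ q),
      restrictRel q (M ∪ (K \ D))))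
    (fun ER _ => Gof x p K ER.1 ER.2) ?_ ?_ ?_ ?_
  · intro q hq
    obtain ⟨hq1, hq2⟩ := Finset.mem_filter.mp hq
    obtain ⟨h1, h2, -⟩ := fwd hMK hxM hxK hp hD hq1 hq2
    exact Finset.mem_product.mpr ⟨h1, h2⟩
  · intro ER hER
    obtain ⟨hE, hR⟩ := Finset.mem_product.mp hER
    obtain ⟨h1, h2, -, -⟩ := bwd hMK hxM hxK hp hD hE hR
    exact Finset.mem_filter.mpr ⟨h1, h2⟩
  · intro q hq
    obtain ⟨hq1, hq2⟩ := Finset.mem_filter.mp hq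
    exact (fwd hMK hxM hxK hp hD hq1 hq2).2.2
  · intro ER hER
    obtain ⟨hE, hR⟩ := Finset.mem_product.mp hER
    obtain ⟨-, -, h3, h4⟩ := bwd hMK hxM hxK hp hD hE hR
    exact Prod.ext h3 h4

/-- Theorem 5.2: `e(m+1, P) = Σ_{D downset of P} d(P − DP) · e(m, P − D)`. -/
theorem stmt_15 (M M' K : Finset α) (hMK : Disjoint M K) (hM'K : Disjoint M' K)
    (hcard : M'.card = M.card + 1)
    (p : Finset (α × α)) (hp : IsPOon K p) :
    (extPOs M' K p).card =
      ∑ D ∈ downsets K p,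
        dnum (K \ ucl p D) (restrictRel p (K \ ucl p D)) *
          (extPOs M (K \ D) (restrictRel p (K \ D))).card := by
  obtain ⟨x, hxM', hxM⟩ : ∃ x, x ∈ M' ∧ x ∉ M := by
    by_contra h
    push_neg at h
    have hsub : M' ⊆ M := h
    have := Finset.card_le_card hsub
    omega
  have hxK : x ∉ K := Finset.disjoint_left.mp hM'K hxM'
  have hins : Disjoint (insert x M) K := by
    rw [Finset.disjoint_left]
    intro a ha haK
    rcases Finset.mem_insert.mp ha with h | h
    · exact hxK (h ▸ haK)
    · exact Finset.disjoint_left.mp hMK h haK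
  have h1 : (extPOs M' K p).card = (extPOs (insert x M) K p).card :=
    relabel_card hM'K hins
      (by rw [hcard, Finset.card_insert_of_notMem hxM]) p
  rw [h1]
  exact main_step hMK hxM hxK hp
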